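/- Let V be an additive (abelian group)-valued k-functor and F any (abelian group)-valued k-functor. Then every extension of V by F is set-theoretically split: for every exact sequence 0 → F → E →^π V → 0 of (abelian group)-valued k-functors there exists a natural transformation σ : V → E of the underlying set-valued functors (not required to be additive) with π ∘ σ = id_V. -/

import Mathlib

universe u

open TensorProduct

/-- An (abelian group)-valued `k`-functor: a functor from commutative `k`-algebras
(in universe `u`) to abelian groups. -/
structure AbFunctor (k : Type u) [Field k] : Type (u + 1) where
  obj : ∀ (B : Type u) [CommRing B] [Algebra k B], Type u
  [grp : ∀ (B : Type u) [CommRing B] [Algebra k B], AddCommGroup (obj B)]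
  map : ∀ {B C : Type u} [CommRing B] [Algebra k B] [CommRing C] [Algebra k C],
    (B →ₐ[k] C) → (obj B →+ obj C)
  map_id : ∀ (B : Type u) [CommRing B] [Algebra k B],
    map (AlgHom.id k B) = AddMonoidHom.id (obj B)
  map_comp : ∀ {B C D : Type u} [CommRing B] [Algebra k B] [CommRing C] [Algebra k C]
    [CommRing D] [Algebra k D] (f : B →ₐ[k] C) (g : C →ₐ[k] D),
    map (g.comp f) = (map g).comp (map f)

attribute [instance] AbFunctor.grp

variable (k : Type u) [Field k]

/-- A morphism of (abelian group)-valued `k`-functors. -/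
structure AbHom (F G : AbFunctor k) where
  app : ∀ (B : Type u) [CommRing B] [Algebra k B], F.obj B →+ G.obj B
  naturality : ∀ {B C : Type u} [CommRing B] [Algebra k B] [CommRing C] [Algebra k C]
    (f : B →ₐ[k] C) (x : F.obj B), G.map f (app B x) = app C (F.map f x)

/-- A natural transformation of the underlying set-valued functors
(not required to be additive). -/
structure SetHom (F G : AbFunctor k) where
  app : ∀ (B : Type u) [CommRing B] [Algebra k B], F.obj B → G.obj B
  naturality : ∀ {B C : Type u} [CommRing B] [Algebra k B] [CommRing C] [Algebra k C]
    (f : B →ₐ[k] C) (x : F.obj B), G.map f (app B x) = app C (F.map f x)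

/-- An isomorphism of (abelian group)-valued `k`-functors. -/
structure AbIso (F G : AbFunctor k) where
  hom : AbHom k F G
  inv : AbHom k G F
  hom_inv : ∀ (B : Type u) [CommRing B] [Algebra k B] (x : F.obj B),
    inv.app B (hom.app B x) = x
  inv_hom : ∀ (B : Type u) [CommRing B] [Algebra k B] (x : G.obj B),
    hom.app B (inv.app B x) = x
/-- `𝔾_a^ι`, the direct sum of `ι` copies of the additive group functor,
`B ↦ ⊕_{i : ι} (B, +)`. -/
noncomputable def Ga (ι : Type u) : AbFunctor k where
  obj B _ _ := ι →₀ B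
  grp B _ _ := inferInstance
  map f := Finsupp.mapRange.addMonoidHom f.toRingHom.toAddMonoidHom
  map_id B _ _ := by
    ext x i
    simp [Finsupp.mapRange.addMonoidHom]
  map_comp f g := by
    ext x i
    simp [Finsupp.mapRange.addMonoidHom]
    erw [Finsupp.mapRange_single]
    try rfl
/-- A functor is strictly additive if it is isomorphic to `𝔾_a^α` for some
`α ∈ {0, 1, …, ∞}`. -/
def IsStrictlyAdditive (F : AbFunctor k) : Prop :=
  (∃ n : ℕ, Nonempty (AbIso k F (Ga k (ULift.{u} (Fin n))))) ∨
    Nonempty (AbIso k F (Ga k (ULift.{u} ℕ)))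
/-- `0 → F' → F → F'' → 0` is a short exact sequence of (abelian group)-valued
`k`-functors (exactness is objectwise). -/
structure IsShortExact {F' F F'' : AbFunctor k} (i : AbHom k F' F)
    (p : AbHom k F F'') : Prop where
  inj : ∀ (B : Type u) [CommRing B] [Algebra k B], Function.Injective (i.app B)
  surj : ∀ (B : Type u) [CommRing B] [Algebra k B], Function.Surjective (p.app B)
  exact : ∀ (B : Type u) [CommRing B] [Algebra k B] (x : F.obj B),
    p.app B x = 0 ↔ x ∈ Set.range (i.app B)
/-- A functor is additive if it admits a finite filtration with strictly additive
successive quotients; equivalently (and as formalized here), the class of additive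
functors is the smallest class containing the strictly additive functors and closed
under extensions with strictly additive quotients. -/
inductive IsAdditive : AbFunctor k → Prop
  | of_strict (F : AbFunctor k) : IsStrictlyAdditive k F → IsAdditive F
  | of_ext {F' F F'' : AbFunctor k} (i : AbHom k F' F) (p : AbHom k F F'') :
      IsShortExact k i p → IsAdditive F' → IsStrictlyAdditive k F'' → IsAdditive F

/-! Call a functor *set-projective* when every epimorphism onto it has a set-theoretic
section. This property passes to isomorphic functors and to extensions, so by induction on
additivity only `𝔾_a^ι` needs an argument.
There, a lift `eᵢ ∈ E(k[X])` of the `i`-th coordinate `X` gives a natural section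
`sᵢ b = E(ev_b) eᵢ - E(ev_0) eᵢ` of the `i`-th copy of `𝔾_a`, normalised so that `sᵢ 0 = 0`;
hence `x ↦ ∑ᵢ sᵢ (xᵢ)` is natural although supports shrink under base change.
For an extension `0 → V' → W → V'' → 0` and `π : E ↠ W`, a section `τ` over `V''` leaves
the defect `w - π (τ (p w))` in `V'`, and this is lifted through the pullback `E ×_W V' ↠ V'`. -/

def SetProjective (V : AbFunctor k) : Prop :=
  ∀ {E : AbFunctor k} (pi : AbHom k E V),
    (∀ (B : Type u) [CommRing B] [Algebra k B], Function.Surjective (pi.app B)) →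
    ∃ σ : SetHom k V E, ∀ (B : Type u) [CommRing B] [Algebra k B] (x : V.obj B),
      pi.app B (σ.app B x) = x

variable {k}

lemma AbFunctor.map_map (F : AbFunctor k) {B C D : Type u} [CommRing B] [Algebra k B]
    [CommRing C] [Algebra k C] [CommRing D] [Algebra k D] (f : B →ₐ[k] C) (g : C →ₐ[k] D)
    (x : F.obj B) : F.map g (F.map f x) = F.map (g.comp f) x := by
  rw [F.map_comp]
  rfl

def AbHom.comp {F G H : AbFunctor k} (g : AbHom k G H) (f : AbHom k F G) : AbHom k F H where
  app B _ _ := (g.app B).comp (f.app B)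
  naturality φ x := by simp only [AddMonoidHom.comp_apply, g.naturality, f.naturality]

@[simp]
lemma AbHom.comp_app {F G H : AbFunctor k} (g : AbHom k G H) (f : AbHom k F G) (B : Type u)
    [CommRing B] [Algebra k B] (x : F.obj B) :
    (g.comp f).app B x = g.app B (f.app B x) := rfl

section Ga

variable {ι : Type u}

lemma Ga_map_single {B C : Type u} [CommRing B] [Algebra k B] [CommRing C] [Algebra k C]
    (f : B →ₐ[k] C) (i : ι) (b : B) :
    (Ga k ι).map f (Finsupp.single i b) = Finsupp.single i (f b) :=
  Finsupp.mapRange_single (hf := map_zero f)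

lemma Ga_sum_map_index {B C : Type u} [CommRing B] [Algebra k B] [CommRing C] [Algebra k C]
    (f : B →ₐ[k] C) (x : (Ga k ι).obj B) {M : Type*} [AddCommMonoid M] (g : ι → C → M)
    (hg : ∀ i, g i 0 = 0) :
    Finsupp.sum ((Ga k ι).map f x : ι →₀ C) g = Finsupp.sum (x : ι →₀ B) fun i b => g i (f b) :=
  Finsupp.sum_mapRange_index (hf := map_zero f) hg

theorem setProjective_Ga : SetProjective k (Ga k ι) := by
  intro E pi hpi
  choose e he using fun i : ι => hpi (Polynomial k) (Finsupp.single i Polynomial.X)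
  let s (B : Type u) [CommRing B] [Algebra k B] (i : ι) (b : B) : E.obj B :=
    E.map (Polynomial.aeval b) (e i) - E.map (Polynomial.aeval 0) (e i)
  have s_zero (B : Type u) [CommRing B] [Algebra k B] (i : ι) : s B i 0 = 0 := sub_self _
  have s_natural {B C : Type u} [CommRing B] [Algebra k B] [CommRing C] [Algebra k C]
      (f : B →ₐ[k] C) (i : ι) (b : B) : E.map f (s B i b) = s C i (f b) := by
    simp only [s, map_sub, E.map_map, ← Polynomial.aeval_algHom, map_zero]
  have pi_s (B : Type u) [CommRing B] [Algebra k B] (i : ι) (b : B) :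
      pi.app B (s B i b) = Finsupp.single i b := by
    simp only [s, map_sub, ← pi.naturality, he, Ga_map_single, Polynomial.aeval_X,
      Finsupp.single_zero]
    exact sub_zero _
  refine ⟨⟨fun B _ _ x => Finsupp.sum (x : ι →₀ B) (s B), @fun B C _ _ _ _ f x => ?_⟩,
    fun B _ _ x => ?_⟩
  · refine (map_finsuppSum (E.map f) (x : ι →₀ B) (s B)).trans ?_
    rw [Ga_sum_map_index f x _ (s_zero _)]
    simp only [s_natural]
  · refine (map_finsuppSum (pi.app B) (x : ι →₀ B) (s B)).trans ?_
    simp only [pi_s]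
    exact Finsupp.sum_single x

end Ga

theorem SetProjective.of_iso {V W : AbFunctor k} (e : AbIso k V W) (hW : SetProjective k W) :
    SetProjective k V := by
  intro E pi hpi
  obtain ⟨σ, hσ⟩ := hW (e.hom.comp pi) fun B _ _ w =>
    let ⟨x, hx⟩ := hpi B (e.inv.app B w)
    ⟨x, by rw [AbHom.comp_app, hx, e.inv_hom]⟩
  refine ⟨⟨fun B _ _ v => σ.app B (e.hom.app B v), fun f v => ?_⟩, fun B _ _ v => ?_⟩
  · rw [σ.naturality, e.hom.naturality]
  · have h := congrArg (e.inv.app B) (hσ B (e.hom.app B v))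
    rwa [AbHom.comp_app, e.hom_inv, e.hom_inv] at h

theorem IsStrictlyAdditive.setProjective {V : AbFunctor k} (hV : IsStrictlyAdditive k V) :
    SetProjective k V := by
  rcases hV with ⟨n, ⟨e⟩⟩ | ⟨⟨e⟩⟩ <;> exact setProjective_Ga.of_iso e

namespace AbHom

variable {E V' W : AbFunctor k} (p : AbHom k E W) (i : AbHom k V' W)

def pullback : AbFunctor k where
  obj B _ _ :=
    ((p.app B).comp (AddMonoidHom.fst _ _)).eqLocus ((i.app B).comp (AddMonoidHom.snd _ _))
  grp B _ _ := inferInstance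
  map f := AddMonoidHom.codRestrict
    ((AddMonoidHom.prodMap (E.map f) (V'.map f)).comp (AddSubgroup.subtype _)) _
    fun x => by
      show p.app _ (E.map f x.1.1) = i.app _ (V'.map f x.1.2)
      rw [← p.naturality, ← i.naturality, show p.app _ x.1.1 = i.app _ x.1.2 from x.2]
  map_id B _ _ := by
    ext x
    · exact DFunLike.congr_fun (E.map_id B) x.1.1
    · exact DFunLike.congr_fun (V'.map_id B) x.1.2
  map_comp f g := by
    ext x
    · exact (E.map_map f g x.1.1).symm
    · exact (V'.map_map f g x.1.2).symm

def pullbackFst : AbHom k (p.pullback i) E where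
  app _ _ _ := (AddMonoidHom.fst _ _).comp (AddSubgroup.subtype _)
  naturality _ _ := rfl

def pullbackSnd : AbHom k (p.pullback i) V' where
  app _ _ _ := (AddMonoidHom.snd _ _).comp (AddSubgroup.subtype _)
  naturality _ _ := rfl

lemma pullback_condition (B : Type u) [CommRing B] [Algebra k B] (x : (p.pullback i).obj B) :
    p.app B ((p.pullbackFst i).app B x) = i.app B ((p.pullbackSnd i).app B x) :=
  x.2

lemma pullbackSnd_surjective {p : AbHom k E W}
    (hp : ∀ (B : Type u) [CommRing B] [Algebra k B], Function.Surjective (p.app B))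
    (B : Type u) [CommRing B] [Algebra k B] :
    Function.Surjective ((p.pullbackSnd i).app B) := fun v =>
  let ⟨e, he⟩ := hp B (i.app B v)
  ⟨⟨(e, v), he⟩, rfl⟩

end AbHom

theorem IsShortExact.exists_setHom_lift {X V' W V'' : AbFunctor k} {i : AbHom k V' W}
    {p : AbHom k W V''} (hex : IsShortExact k i p) (g : SetHom k X W)
    (hg : ∀ (B : Type u) [CommRing B] [Algebra k B] (x : X.obj B), p.app B (g.app B x) = 0) :
    ∃ d : SetHom k X V', ∀ (B : Type u) [CommRing B] [Algebra k B] (x : X.obj B),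
      i.app B (d.app B x) = g.app B x := by
  choose d hd using fun (B : Type u) [CommRing B] [Algebra k B] (x : X.obj B) =>
    (hex.exact B _).mp (hg B x)
  refine ⟨⟨d, @fun B C _ _ _ _ f x => hex.inj C ?_⟩, hd⟩
  rw [← i.naturality, hd, hd, g.naturality]

theorem SetProjective.of_shortExact {V' W V'' : AbFunctor k} {i : AbHom k V' W}
    {p : AbHom k W V''} (hex : IsShortExact k i p) (h' : SetProjective k V')
    (h'' : SetProjective k V'') : SetProjective k W := by
  intro E pi hpi
  obtain ⟨τ, hτ⟩ := h'' (p.comp pi) fun B _ _ v =>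
    let ⟨w, hw⟩ := hex.surj B v
    let ⟨e, he⟩ := hpi B w
    ⟨e, by rw [AbHom.comp_app, he, hw]⟩
  let defect : SetHom k W W :=
    ⟨fun B _ _ w => w - pi.app B (τ.app B (p.app B w)), fun f w => by
      rw [map_sub, pi.naturality, τ.naturality, p.naturality]⟩
  obtain ⟨d, hd⟩ := hex.exists_setHom_lift defect fun B _ _ w => by
    simp only [defect, map_sub, ← AbHom.comp_app, hτ, sub_self]
  obtain ⟨σ', hσ'⟩ := h' (pi.pullbackSnd i) (AbHom.pullbackSnd_surjective i hpi)
  refine ⟨⟨fun B _ _ w =>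
      (pi.pullbackFst i).app B (σ'.app B (d.app B w)) + τ.app B (p.app B w),
      fun f w => ?_⟩, fun B _ _ w => ?_⟩
  · rw [map_add, (pi.pullbackFst i).naturality, σ'.naturality, d.naturality, τ.naturality,
      p.naturality]
  · rw [map_add, AbHom.pullback_condition, hσ', hd]
    exact sub_add_cancel w _

theorem IsAdditive.setProjective {V : AbFunctor k} (hV : IsAdditive k V) :
    SetProjective k V := by
  induction hV with
  | of_strict V hV => exact hV.setProjective
  | of_ext i p hex _ hV'' ih => exact SetProjective.of_shortExact hex ih hV''.setProjective

/-- Every extension of an additive functor `V` by any functor `F` is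
set-theoretically split. -/
theorem additive_extension_set_split {k : Type u} [Field k] {F E V : AbFunctor k}
    (hV : IsAdditive k V) (i : AbHom k F E) (pi : AbHom k E V)
    (hex : IsShortExact k i pi) :
    ∃ σ : SetHom k V E, ∀ (B : Type u) [CommRing B] [Algebra k B] (x : V.obj B),
      pi.app B (σ.app B x) = x :=
  hV.setProjective pi hex.surj
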